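/- Let l, k ∈ ℝ with l + k ≤ −3/4. If u : (0,∞) → ℂ is differentiable, satisfies (𝒩u)(x̂) = 0 for all x̂ > 0, and satisfies ∫₁^∞ |u(x̂)|²·x̂^{−1} dx̂ < ∞, then u(x̂) = 0 for all x̂ > 0. (Every nonzero solution of the homogeneous model equation is a multiple of x̂^{−l−1/2}(1+x̂)^{−k−1/4}, which fails to be square-integrable against dx̂/x̂ near infinity when l + k + 3/4 ≤ 0.) -/

import Mathlib

/-!
The weight `φ(x) = x^(l+1/2) (1+x)^(k+1/4)` conjugates the model operator to the Euler operator: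
`x · (φ u)' = φ · 𝒩u`. A solution of `𝒩u = 0` on `(0, ∞)` is therefore `u = c / φ`. For `x ≥ 1`
we have `φ(x) ≤ 2^|k+1/4| x^(l+k+3/4) ≤ 2^|k+1/4|` when `l + k ≤ -3/4`, so `|u|` is bounded below
on `(1, ∞)` unless `c = 0`, and then `∫₁^∞ |u|²/x` diverges like `∫₁^∞ dx/x`.
-/

open MeasureTheory Set

/-- The model operator
`(𝒩u)(x̂) = x̂·u'(x̂) + (x̂/(1+x̂))·(k + 1/4)·u(x̂) + (l + 1/2)·u(x̂)`. -/
noncomputable def modelN (l k : ℝ) (u : ℝ → ℂ) : ℝ → ℂ := fun x =>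
  (x : ℂ) * deriv u x + ((x / (1 + x) : ℝ) : ℂ) * ((k : ℂ) + 1 / 4) * u x
    + ((l : ℂ) + 1 / 2) * u x

noncomputable def modelWeight (l k x : ℝ) : ℝ := x ^ (l + 1 / 2) * (1 + x) ^ (k + 1 / 4)

lemma modelWeight_pos (l k : ℝ) {x : ℝ} (hx : 0 < x) : 0 < modelWeight l k x :=
  mul_pos (Real.rpow_pos_of_pos hx _) (Real.rpow_pos_of_pos (by linarith) _)

lemma hasDerivAt_modelWeight (l k : ℝ) {x : ℝ} (hx : 0 < x) :
    HasDerivAt (modelWeight l k)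
      (modelWeight l k x / x * (x / (1 + x) * (k + 1 / 4) + (l + 1 / 2))) x := by
  have hx1 : 0 < 1 + x := by linarith
  have h1 : HasDerivAt (fun y : ℝ => y ^ (l + 1 / 2)) _ x :=
    Real.hasDerivAt_rpow_const (Or.inl hx.ne')
  have h2 : HasDerivAt (fun y : ℝ => (1 + y) ^ (k + 1 / 4)) _ x :=
    ((hasDerivAt_id' x).const_add 1).rpow_const (Or.inl hx1.ne')
  refine (h1.mul h2).congr_deriv ?_
  rw [Real.rpow_sub hx, Real.rpow_sub hx1, Real.rpow_one, Real.rpow_one, modelWeight]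
  field_simp
  ring

lemma hasDerivAt_modelWeight_mul (l k : ℝ) {u : ℝ → ℂ} {x : ℝ} (hx : 0 < x)
    (hu : DifferentiableAt ℝ u x) :
    HasDerivAt (fun y => (modelWeight l k y : ℂ) * u y)
      ((modelWeight l k x / x : ℝ) * modelN l k u x) x := by
  refine ((hasDerivAt_modelWeight l k hx).ofReal_comp.mul hu.hasDerivAt).congr_deriv ?_
  have hx' : (x : ℂ) ≠ 0 := by exact_mod_cast hx.ne'
  simp only [modelN]
  push_cast
  field_simp
  ring

lemma modelWeight_mul_eq_of_modelN_eq_zero {l k : ℝ} {u : ℝ → ℂ}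
    (hu : ∀ x : ℝ, 0 < x → DifferentiableAt ℝ u x)
    (hode : ∀ x : ℝ, 0 < x → modelN l k u x = 0) {x : ℝ} (hx : 0 < x) :
    (modelWeight l k x : ℂ) * u x = (modelWeight l k 1 : ℂ) * u 1 := by
  have hderiv : ∀ y ∈ Ioi (0 : ℝ), HasDerivAt (fun y => (modelWeight l k y : ℂ) * u y) 0 y :=
    fun y hy => by simpa [hode y hy] using hasDerivAt_modelWeight_mul l k hy (hu y hy)
  exact isOpen_Ioi.is_const_of_deriv_eq_zero isPreconnected_Ioi
    (fun y hy => (hderiv y hy).differentiableAt.differentiableWithinAt)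
    (fun y hy => (hderiv y hy).deriv) hx (zero_lt_one' ℝ)

lemma one_add_rpow_le_two_rpow_abs_mul_rpow {x : ℝ} (hx : 1 ≤ x) (a : ℝ) :
    (1 + x) ^ a ≤ 2 ^ |a| * x ^ a := by
  have hx0 : 0 < x := by linarith
  rcases le_total 0 a with ha | ha
  · calc (1 + x) ^ a ≤ (2 * x) ^ a := Real.rpow_le_rpow (by linarith) (by linarith) ha
      _ = 2 ^ |a| * x ^ a := by rw [abs_of_nonneg ha, Real.mul_rpow zero_le_two hx0.le]
  · calc (1 + x) ^ a ≤ x ^ a := Real.rpow_le_rpow_of_nonpos hx0 (by linarith) ha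
      _ ≤ 2 ^ |a| * x ^ a :=
        le_mul_of_one_le_left (Real.rpow_nonneg hx0.le _)
          (Real.one_le_rpow one_le_two (abs_nonneg a))

lemma modelWeight_le {l k x : ℝ} (hlk : l + k ≤ -(3 / 4)) (hx : 1 ≤ x) :
    modelWeight l k x ≤ 2 ^ |k + 1 / 4| := by
  have hx0 : 0 < x := by linarith
  calc modelWeight l k x ≤ x ^ (l + 1 / 2) * (2 ^ |k + 1 / 4| * x ^ (k + 1 / 4)) :=
        mul_le_mul_of_nonneg_left (one_add_rpow_le_two_rpow_abs_mul_rpow hx _)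
          (Real.rpow_nonneg hx0.le _)
    _ = 2 ^ |k + 1 / 4| * x ^ (l + k + 3 / 4) := by
        rw [mul_left_comm, ← Real.rpow_add hx0]; ring_nf
    _ ≤ 2 ^ |k + 1 / 4| := mul_le_of_le_one_right (by positivity)
        (Real.rpow_le_one_of_one_le_of_nonpos hx (by linarith))

lemma norm_modelWeight_mul_le {l k x : ℝ} (hlk : l + k ≤ -(3 / 4)) (hx : 1 ≤ x) (v : ℂ) :
    ‖(modelWeight l k x : ℂ) * v‖ ≤ 2 ^ |k + 1 / 4| * ‖v‖ := by
  rw [norm_mul, Complex.norm_real, Real.norm_of_nonneg (modelWeight_pos l k (by linarith)).le]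
  exact mul_le_mul_of_nonneg_right (modelWeight_le hlk hx) (norm_nonneg v)

lemma setLIntegral_Ioi_ofReal_div_eq_top {a c : ℝ} (ha : 0 ≤ a) (hc : 0 < c) :
    ∫⁻ x in Ioi a, ENNReal.ofReal (c / x) = ⊤ := by
  by_contra h
  have hpos : ∀ᵐ x ∂volume.restrict (Ioi a), 0 ≤ c / x :=
    (ae_restrict_mem measurableSet_Ioi).mono fun x hx => div_nonneg hc.le (ha.trans hx.le)
  have hint : IntegrableOn (fun x => c / x) (Ioi a) := (lintegral_ofReal_ne_top_iff_integrable
    (measurable_const.div measurable_id).aestronglyMeasurable hpos).1 h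
  exact not_integrableOn_Ioi_inv
    ((hint.const_mul c⁻¹).congr (.of_forall fun x => by field_simp))

lemma setLIntegral_Ioi_ofReal_norm_sq_div_eq_top {E : Type*} [NormedAddCommGroup E]
    {u : ℝ → E} {a δ : ℝ} (ha : 0 ≤ a) (hδ : 0 < δ) (hu : ∀ x ∈ Ioi a, δ ≤ ‖u x‖) :
    ∫⁻ x in Ioi a, ENNReal.ofReal (‖u x‖ ^ 2 / x) = ⊤ := by
  refine eq_top_mono (setLIntegral_mono' measurableSet_Ioi fun x hx => ?_)
    (setLIntegral_Ioi_ofReal_div_eq_top ha (pow_pos hδ 2))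
  have hx0 : 0 < x := ha.trans_lt hx
  gcongr
  exact hu x hx

/-- Below the threshold `l + k ≤ −3/4`, any homogeneous solution of
the model equation that is square-integrable against `dx̂/x̂` near infinity vanishes. -/
theorem stmt8 (l k : ℝ) (hlk : l + k ≤ -(3 / 4)) (u : ℝ → ℂ)
    (hu : ∀ x : ℝ, 0 < x → DifferentiableAt ℝ u x)
    (hode : ∀ x : ℝ, 0 < x → modelN l k u x = 0)
    (hint : ∫⁻ x in Set.Ioi (1 : ℝ), ENNReal.ofReal (‖u x‖ ^ 2 / x) < ⊤) :
    ∀ x : ℝ, 0 < x → u x = 0 := by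
  set c : ℂ := (modelWeight l k 1 : ℂ) * u 1
  have hsol : ∀ x, 0 < x → (modelWeight l k x : ℂ) * u x = c :=
    fun x hx => modelWeight_mul_eq_of_modelN_eq_zero hu hode hx
  have hc : c = 0 := by
    by_contra hc
    have hC : (0 : ℝ) < 2 ^ |k + 1 / 4| := by positivity
    refine hint.ne (setLIntegral_Ioi_ofReal_norm_sq_div_eq_top zero_le_one
      (div_pos (norm_pos_iff.2 hc) hC) fun x hx => ?_)
    rw [div_le_iff₀' hC, ← hsol x (zero_lt_one.trans hx)]
    exact norm_modelWeight_mul_le hlk (le_of_lt hx) (u x)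
  intro x hx
  have hφ : (modelWeight l k x : ℂ) ≠ 0 := by exact_mod_cast (modelWeight_pos l k hx).ne'
  simpa [hc, hφ] using hsol x hx
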